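/- arXiv:1407.1754 — 4 statements merged into one kernel-verified Lean document; each statement's English description precedes it below -/
import Mathlib

section
/- Let π be a probability measure on a finite set Ω and g : Ω → ℝ≥0 a π-density (∑ g(x)π(x) = 1). Suppose ∑_{x}(√g(x) − 1)² π(x) ≤ u² for some 0 < u ≤ 1. Then ∑_{x} |g(x) − 1| · 1{|g(x) − 1| ≥ √u} · π(x) ≤ 10 u^{3/2}. -/
open Finset Real

lemma density_tail_aux (v s : ℝ) (hv0 : 0 < v) (hv1 : v ≤ 1) (hs : 0 ≤ s)
    (h : v ≤ |s ^ 2 - 1|) : |s ^ 2 - 1| ≤ 9 / v * (s - 1) ^ 2 := by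
  have habs : |s ^ 2 - 1| = |s - 1| * (s + 1) := by
    rw [show s ^ 2 - 1 = (s - 1) * (s + 1) by ring, abs_mul,
      abs_of_nonneg (by linarith : (0:ℝ) ≤ s + 1)]
  rw [habs] at h ⊢
  rw [div_mul_eq_mul_div, le_div_iff₀ hv0]
  have h2 : (s - 1) ^ 2 = |s - 1| ^ 2 := (sq_abs _).symm
  rcases le_or_gt s 2 with hc | hc
  · have h3 : v ≤ 3 * |s - 1| := by nlinarith [abs_nonneg (s - 1)]
    nlinarith [abs_nonneg (s - 1)]
  · have h1 : |s - 1| = s - 1 := abs_of_nonneg (by linarith)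
    nlinarith

theorem density_tail_bound {Ω : Type*} [Fintype Ω]
    (p g : Ω → ℝ) (hp0 : ∀ x, 0 ≤ p x) (hp1 : ∑ x, p x = 1)
    (hg0 : ∀ x, 0 ≤ g x) (hg1 : ∑ x, g x * p x = 1)
    (u : ℝ) (hu0 : 0 < u) (hu1 : u ≤ 1)
    (hH : ∑ x, (Real.sqrt (g x) - 1) ^ 2 * p x ≤ u ^ 2) :
    ∑ x, |g x - 1| * (if Real.sqrt u ≤ |g x - 1| then (1 : ℝ) else 0) * p x ≤
      10 * u ^ ((3 : ℝ) / 2) := by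
  have hsu : 0 < Real.sqrt u := Real.sqrt_pos.mpr hu0
  have hsu1 : Real.sqrt u ≤ 1 := by
    rw [show (1:ℝ) = Real.sqrt 1 by simp]
    exact Real.sqrt_le_sqrt hu1
  have key : ∀ x, |g x - 1| * (if Real.sqrt u ≤ |g x - 1| then (1 : ℝ) else 0) * p x ≤
      9 / Real.sqrt u * ((Real.sqrt (g x) - 1) ^ 2 * p x) := by
    intro x
    by_cases h : Real.sqrt u ≤ |g x - 1|
    · rw [if_pos h, mul_one, ← mul_assoc]
      refine mul_le_mul_of_nonneg_right ?_ (hp0 x)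
      have hsq : Real.sqrt (g x) ^ 2 = g x := Real.sq_sqrt (hg0 x)
      have := density_tail_aux (Real.sqrt u) (Real.sqrt (g x)) hsu hsu1
        (Real.sqrt_nonneg _) (by rw [hsq]; exact h)
      rwa [hsq] at this
    · rw [if_neg h, mul_zero, zero_mul]
      exact mul_nonneg (div_nonneg (by norm_num) (Real.sqrt_nonneg u))
        (mul_nonneg (sq_nonneg _) (hp0 x))
  calc ∑ x, |g x - 1| * (if Real.sqrt u ≤ |g x - 1| then (1 : ℝ) else 0) * p x
      ≤ ∑ x, 9 / Real.sqrt u * ((Real.sqrt (g x) - 1) ^ 2 * p x) :=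
        Finset.sum_le_sum fun x _ => key x
    _ = 9 / Real.sqrt u * ∑ x, (Real.sqrt (g x) - 1) ^ 2 * p x := by
        rw [Finset.mul_sum]
    _ ≤ 9 / Real.sqrt u * u ^ 2 := by
        refine mul_le_mul_of_nonneg_left hH (by positivity)
    _ = 9 * u ^ ((3 : ℝ) / 2) := by
        rw [Real.sqrt_eq_rpow, div_mul_eq_mul_div, mul_div_assoc,
          show u ^ 2 = u ^ ((2 : ℝ)) by rw [← Real.rpow_natCast u 2]; norm_num,
          ← Real.rpow_sub hu0]
        norm_num
    _ ≤ 10 * u ^ ((3 : ℝ) / 2) := by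
        have : 0 ≤ u ^ ((3 : ℝ) / 2) := Real.rpow_nonneg hu0.le _
        linarith
end

section
/- Let π be a probability measure on a finite set Ω and g : Ω → ℝ≥0 a π-density with ∑_x (√g(x) − 1)² π(x) ≤ u² for some 0 < u ≤ 1. Define h₁(x) = (g(x) − 1)·1{|g(x)−1| < √u} and h₂(x) = (g(x) − 1)·1{|g(x)−1| ≥ √u}. Then ‖h₁‖_∞ ≤ √u and ∑_x |h₂(x)| π(x) ≤ 10 u^{3/2}, and g − 1 = h₁ + h₂. -/
open Finset Real

theorem density_splitting {Ω : Type*} [Fintype Ω]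
    (p g : Ω → ℝ) (hp0 : ∀ x, 0 ≤ p x) (hp1 : ∑ x, p x = 1)
    (hg0 : ∀ x, 0 ≤ g x) (hg1 : ∑ x, g x * p x = 1)
    (u : ℝ) (hu0 : 0 < u) (hu1 : u ≤ 1)
    (hH : ∑ x, (Real.sqrt (g x) - 1) ^ 2 * p x ≤ u ^ 2)
    (h₁ h₂ : Ω → ℝ)
    (hh₁ : h₁ = fun x => (g x - 1) * (if |g x - 1| < Real.sqrt u then (1 : ℝ) else 0))
    (hh₂ : h₂ = fun x => (g x - 1) * (if Real.sqrt u ≤ |g x - 1| then (1 : ℝ) else 0)) :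
    (∀ x, |h₁ x| ≤ Real.sqrt u) ∧
      (∑ x, |h₂ x| * p x ≤ 10 * u ^ ((3 : ℝ) / 2)) ∧
      (∀ x, g x - 1 = h₁ x + h₂ x) := by
  have hvpos : 0 < Real.sqrt u := Real.sqrt_pos.mpr hu0
  have hvle : Real.sqrt u ≤ 1 := by
    rw [show (1:ℝ) = Real.sqrt 1 by simp]
    exact Real.sqrt_le_sqrt hu1
  refine ⟨?_, ?_, ?_⟩
  · intro x
    rw [hh₁]
    dsimp only
    split
    · rw [mul_one]; exact le_of_lt ‹_›
    · simp [hvpos.le]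
  · have key : ∀ x, |h₂ x| * p x ≤
        9 / Real.sqrt u * ((Real.sqrt (g x) - 1) ^ 2 * p x) := by
      intro x
      have hs : Real.sqrt (g x) ^ 2 = g x := Real.sq_sqrt (hg0 x)
      have hs0 : 0 ≤ Real.sqrt (g x) := Real.sqrt_nonneg _
      set s := Real.sqrt (g x) with hsdef
      rw [hh₂]
      dsimp only
      split
      · rename_i h
        rw [mul_one]
        have hb : |g x - 1| ≤ 9 / Real.sqrt u * (s - 1) ^ 2 := by
          rw [div_mul_eq_mul_div, le_div_iff₀ hvpos]
          rcases abs_cases (g x - 1) with ⟨he, h1⟩ | ⟨he, h1⟩ <;> rw [he] <;> rw [he] at h <;>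
            rcases le_or_gt s 2 with hc | hc <;>
            nlinarith [sq_nonneg (s - 1), sq_nonneg (s + 1), hvpos.le,
              mul_le_mul h h (hvpos.le) (by linarith), sq_nonneg (s*s - 1)]
        have := mul_le_mul_of_nonneg_right hb (hp0 x)
        linarith [this]
      · have : (0:ℝ) ≤ 9 / Real.sqrt u * ((s - 1) ^ 2 * p x) :=
          mul_nonneg (by positivity) (mul_nonneg (sq_nonneg _) (hp0 x))
        simpa [hp0 x] using this
    calc ∑ x, |h₂ x| * p x
        ≤ ∑ x, 9 / Real.sqrt u * ((Real.sqrt (g x) - 1) ^ 2 * p x) :=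
          Finset.sum_le_sum fun x _ => key x
      _ = 9 / Real.sqrt u * ∑ x, (Real.sqrt (g x) - 1) ^ 2 * p x := by
          rw [Finset.mul_sum]
      _ ≤ 9 / Real.sqrt u * u ^ 2 := by
          apply mul_le_mul_of_nonneg_left hH (by positivity)
      _ ≤ 10 * u ^ ((3 : ℝ) / 2) := by
          have h32 : u ^ ((3 : ℝ) / 2) = u * Real.sqrt u := by
            rw [show (3:ℝ)/2 = 1 + 1/2 by norm_num, Real.rpow_add hu0, Real.rpow_one,
              ← Real.sqrt_eq_rpow]
          rw [h32, div_mul_eq_mul_div, div_le_iff₀ hvpos]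
          have hsq : Real.sqrt u ^ 2 = u := Real.sq_sqrt hu0.le
          nlinarith [hu0.le, hvpos.le]
  · intro x
    rw [hh₁, hh₂]
    dsimp only
    by_cases h : |g x - 1| < Real.sqrt u
    · simp [h, not_le.mpr h]
    · simp [h, not_lt.mp h]
end

section
/- Let (P_t) be a reversible irreducible continuous-time Markov chain on a finite state space with stationary measure π, and let d_H(t) = max_x √(∑_y (√(P_t(x,y)/π(y)) − 1)² π(y)) be the maximal Hellinger distance to equilibrium. Then for every t ≥ 0, d_H(2t) ≤ 7 · d_H(t)^{5/4}. -/
set_option linter.unusedVariables false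

open Finset Real

/-- Maximal Hellinger distance to equilibrium. -/
noncomputable def dH {Ω : Type*} [Fintype Ω] (P : ℝ → Ω → Ω → ℝ) (p : Ω → ℝ) (t : ℝ) : ℝ :=
  ⨆ x : Ω, Real.sqrt (∑ y, (Real.sqrt (P t x y / p y) - 1) ^ 2 * p y)


private lemma cs_sum {Ω : Type*} [Fintype Ω] (p a b : Ω → ℝ) (hp : ∀ i, 0 ≤ p i) :
    (∑ i, p i * (a i * b i)) ^ 2 ≤ (∑ i, p i * a i ^ 2) * (∑ i, p i * b i ^ 2) := by
  have h := Finset.sum_mul_sq_le_sq_mul_sq Finset.univ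
      (fun i => Real.sqrt (p i) * a i) (fun i => Real.sqrt (p i) * b i)
  have e1 : ∀ i : Ω, (Real.sqrt (p i) * a i) * (Real.sqrt (p i) * b i) = p i * (a i * b i) := by
    intro i
    have h2 : Real.sqrt (p i) * Real.sqrt (p i) = p i := Real.mul_self_sqrt (hp i)
    calc (Real.sqrt (p i) * a i) * (Real.sqrt (p i) * b i)
        = (Real.sqrt (p i) * Real.sqrt (p i)) * (a i * b i) := by ring
      _ = p i * (a i * b i) := by rw [h2]
  have e2 : ∀ (c : Ω → ℝ) (i : Ω), (Real.sqrt (p i) * c i) ^ 2 = p i * c i ^ 2 := by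
    intro c i
    rw [mul_pow, Real.sq_sqrt (hp i)]
  calc (∑ i, p i * (a i * b i)) ^ 2
      = (∑ i, (Real.sqrt (p i) * a i) * (Real.sqrt (p i) * b i)) ^ 2 := by
        rw [Finset.sum_congr rfl fun i _ => (e1 i).symm]
    _ ≤ (∑ i, (Real.sqrt (p i) * a i) ^ 2) * (∑ i, (Real.sqrt (p i) * b i) ^ 2) := h
    _ = _ := by rw [Finset.sum_congr rfl fun i _ => e2 a i, Finset.sum_congr rfl fun i _ => e2 b i]

private lemma key_min (S v w : ℝ) (hS : 0 ≤ S) (hvw : S - 1 = v + w) :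
    (Real.sqrt S - 1) ^ 2 ≤ 2 * v ^ 2 + 2 * |w| := by
  have hs0 : 0 ≤ Real.sqrt S := Real.sqrt_nonneg S
  have hsq : Real.sqrt S ^ 2 = S := Real.sq_sqrt hS
  have h2 : (Real.sqrt S - 1) ^ 2 ≤ |S - 1| := by
    rcases le_or_gt 1 S with h | h
    · have h1r : 1 ≤ Real.sqrt S := by nlinarith
      rw [abs_of_nonneg (by linarith)]
      nlinarith
    · have h1r : Real.sqrt S ≤ 1 := by nlinarith
      rw [abs_of_nonpos (by linarith)]
      nlinarith
  have h1 : (Real.sqrt S - 1) ^ 2 ≤ (S - 1) ^ 2 := by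
    nlinarith [mul_nonneg (sq_nonneg (Real.sqrt S - 1))
      (show (0:ℝ) ≤ Real.sqrt S ^ 2 + 2 * Real.sqrt S by positivity)]
  rcases le_or_gt (1/2) |v| with hv | hv
  · have habs : |S - 1| ≤ |v| + |w| := by rw [hvw]; exact abs_add_le v w
    have hv2 : |v| ≤ 2 * v ^ 2 := by
      have h3 : |v| * 1 ≤ |v| * (2 * |v|) :=
        mul_le_mul_of_nonneg_left (by linarith) (abs_nonneg v)
      calc |v| = |v| * 1 := by ring
        _ ≤ |v| * (2 * |v|) := h3
        _ = 2 * (|v| * |v|) := by ring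
        _ = 2 * v ^ 2 := by rw [abs_mul_abs_self]; ring
    linarith [abs_nonneg w]
  · rcases le_or_gt |w| 1 with hw | hw
    · have hsub : (S - 1) ^ 2 = (v + w) ^ 2 := by rw [hvw]
      have hw2 : w ^ 2 ≤ |w| := by
        have h3 : |w| * |w| ≤ |w| * 1 := mul_le_mul_of_nonneg_left hw (abs_nonneg w)
        calc w ^ 2 = |w| * |w| := by rw [abs_mul_abs_self]; ring
          _ ≤ |w| := by linarith
      nlinarith [sq_nonneg (v - w)]
    · have habs : |S - 1| ≤ |v| + |w| := by rw [hvw]; exact abs_add_le v w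
      nlinarith [sq_nonneg v, abs_nonneg w]

private lemma helper_swap {Ω : Type*} [Fintype Ω] (p : Ω → ℝ) (hp : ∀ i, 0 ≤ p i)
    (u : Ω → ℝ) (v : Ω → Ω → ℝ) (B C : ℝ) (hB0 : 0 ≤ B)
    (hB : ∀ z, ∑ y, p y * |v y z| ≤ B) (hC : ∑ z, p z * |u z| ≤ C) :
    ∑ y, p y * |∑ z, p z * (u z * v y z)| ≤ B * C := by
  have step1 : ∀ y, |∑ z, p z * (u z * v y z)| ≤ ∑ z, p z * (|u z| * |v y z|) := by
    intro y
    calc |∑ z, p z * (u z * v y z)| ≤ ∑ z, |p z * (u z * v y z)| :=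
          Finset.abs_sum_le_sum_abs _ _
      _ = ∑ z, p z * (|u z| * |v y z|) := Finset.sum_congr rfl fun z _ => by
            rw [abs_mul, abs_mul, abs_of_nonneg (hp z)]
  calc ∑ y, p y * |∑ z, p z * (u z * v y z)|
      ≤ ∑ y, p y * ∑ z, p z * (|u z| * |v y z|) :=
        Finset.sum_le_sum fun y _ => mul_le_mul_of_nonneg_left (step1 y) (hp y)
    _ = ∑ z, (p z * |u z|) * ∑ y, p y * |v y z| := by
        simp_rw [Finset.mul_sum]
        rw [Finset.sum_comm]
        exact Finset.sum_congr rfl fun z _ => Finset.sum_congr rfl fun y _ => by ring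
    _ ≤ ∑ z, (p z * |u z|) * B :=
        Finset.sum_le_sum fun z _ =>
          mul_le_mul_of_nonneg_left (hB z) (mul_nonneg (hp z) (abs_nonneg _))
    _ = B * ∑ z, p z * |u z| := by rw [← Finset.sum_mul]; ring
    _ ≤ B * C := mul_le_mul_of_nonneg_left hC hB0

private lemma final_calc (d T : ℝ) (hd0 : 0 ≤ d) (hT0 : 0 ≤ T)
    (h1 : T ≤ 8 * d ^ 3 + 34 * d ^ 4) (h2 : T ≤ 2) :
    Real.sqrt T ≤ 7 * d ^ ((5 : ℝ) / 4) := by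
  set s := Real.sqrt d with hs
  have hs0 : 0 ≤ s := Real.sqrt_nonneg d
  have hsd : s ^ 2 = d := Real.sq_sqrt hd0
  have hkey : T ≤ 49 * s ^ 5 := by
    rw [← hsd] at h1
    rcases le_or_gt d (0.279) with hc | hc
    · rw [← hsd] at hc
      have hsle : s ≤ 0.53 := by nlinarith
      have h3 : s ^ 3 ≤ (0.53 : ℝ) ^ 3 := pow_le_pow_left₀ hs0 hsle 3
      have big : (0:ℝ) ≤ 49 - 8 * s - 34 * s ^ 3 := by nlinarith
      nlinarith [mul_nonneg (pow_nonneg hs0 5) big]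
    · rw [← hsd] at hc
      have hsge : (0.528 : ℝ) ≤ s := by nlinarith
      have h5 : (0.528 : ℝ) ^ 5 ≤ s ^ 5 := pow_le_pow_left₀ (by norm_num) hsge 5
      nlinarith
  have hpow : (7 * d ^ ((5 : ℝ) / 4)) ^ 2 = 49 * s ^ 5 := by
    have e1 : (d ^ ((5 : ℝ) / 4)) ^ (2 : ℕ) = d ^ ((5 : ℝ) / 2) := by
      rw [← Real.rpow_natCast (d ^ ((5 : ℝ) / 4)) 2, ← Real.rpow_mul hd0]
      norm_num
    have e2 : s ^ (5 : ℕ) = d ^ ((5 : ℝ) / 2) := by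
      rw [hs, Real.sqrt_eq_rpow, ← Real.rpow_natCast (d ^ ((1 : ℝ) / 2)) 5,
        ← Real.rpow_mul hd0]
      norm_num
    calc (7 * d ^ ((5 : ℝ) / 4)) ^ 2 = 49 * (d ^ ((5 : ℝ) / 4)) ^ (2 : ℕ) := by ring
      _ = 49 * s ^ 5 := by rw [e1, ← e2]
  have hR0 : 0 ≤ 7 * d ^ ((5 : ℝ) / 4) := by positivity
  calc Real.sqrt T ≤ Real.sqrt ((7 * d ^ ((5 : ℝ) / 4)) ^ 2) :=
        Real.sqrt_le_sqrt (by rw [hpow]; exact hkey)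
    _ = 7 * d ^ ((5 : ℝ) / 4) := Real.sqrt_sq hR0

theorem hellinger_doubling {Ω : Type*} [Fintype Ω] [Nonempty Ω]
    (P : ℝ → Ω → Ω → ℝ) (p : Ω → ℝ)
    (hP0 : ∀ t ≥ 0, ∀ x y, 0 ≤ P t x y)
    (hP1 : ∀ t ≥ 0, ∀ x, ∑ y, P t x y = 1)
    (hsemi : ∀ s ≥ 0, ∀ t ≥ 0, ∀ x y, P (s + t) x y = ∑ z, P s x z * P t z y)
    (hppos : ∀ x, 0 < p x) (hp1 : ∑ x, p x = 1)
    (hrev : ∀ t ≥ 0, ∀ x y, p x * P t x y = p y * P t y x)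
    (hirr : ∀ t > 0, ∀ x y, 0 < P t x y) :
    ∀ t ≥ (0 : ℝ), dH P p (2 * t) ≤ 7 * dH P p t ^ ((5 : ℝ) / 4) := by
  intro t ht
  have hp : ∀ i, (0:ℝ) ≤ p i := fun i => (hppos i).le
  set d := dH P p t with hd
  set h : Ω → Ω → ℝ := fun a z => Real.sqrt (P t a z / p z) - 1 with hh
  have hf0 : ∀ a z, 0 ≤ P t a z / p z := fun a z => div_nonneg (hP0 t ht a z) (hp z)
  have hfh : ∀ a z, P t a z / p z = (1 + h a z) ^ 2 := by
    intro a z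
    simp only [hh]
    calc P t a z / p z = Real.sqrt (P t a z / p z) ^ 2 := (Real.sq_sqrt (hf0 a z)).symm
      _ = (1 + (Real.sqrt (P t a z / p z) - 1)) ^ 2 := by ring
  have hsymm : ∀ a b, h a b = h b a := by
    intro a b
    have hfd : P t a b / p b = P t b a / p a := by
      rw [div_eq_div_iff (hppos b).ne' (hppos a).ne']
      have h1 := hrev t ht a b
      linarith
    simp only [hh, hfd]
  -- basic distance facts
  have hdle : ∀ a, Real.sqrt (∑ y, (Real.sqrt (P t a y / p y) - 1) ^ 2 * p y) ≤ d := by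
    intro a
    rw [hd]
    exact le_ciSup (f := fun x : Ω => Real.sqrt (∑ y, (Real.sqrt (P t x y / p y) - 1) ^ 2 * p y))
      (Set.Finite.bddAbove (Set.finite_range _)) a
  have hd0 : 0 ≤ d := le_trans (Real.sqrt_nonneg _) (hdle (Classical.arbitrary Ω))
  have hnorm : ∀ a, ∑ z, p z * (h a z) ^ 2 ≤ d ^ 2 := by
    intro a
    have hnn : 0 ≤ ∑ y, (Real.sqrt (P t a y / p y) - 1) ^ 2 * p y :=
      Finset.sum_nonneg fun y _ => mul_nonneg (sq_nonneg _) (hp y)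
    have e : ∑ z, p z * (h a z) ^ 2 = ∑ y, (Real.sqrt (P t a y / p y) - 1) ^ 2 * p y :=
      Finset.sum_congr rfl fun y _ => by simp only [hh]; ring
    calc ∑ z, p z * (h a z) ^ 2 = ∑ y, (Real.sqrt (P t a y / p y) - 1) ^ 2 * p y := e
      _ = Real.sqrt (∑ y, (Real.sqrt (P t a y / p y) - 1) ^ 2 * p y) ^ 2 :=
          (Real.sq_sqrt hnn).symm
      _ ≤ d ^ 2 := pow_le_pow_left₀ (Real.sqrt_nonneg _) (hdle a) 2
  have habs : ∀ a, ∑ z, p z * |h a z| ≤ d := by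
    intro a
    have hcs := cs_sum p (fun z => |h a z|) (fun _ => 1) hp
    simp only [mul_one, one_pow] at hcs
    have e : ∑ i, p i * |h a i| ^ 2 = ∑ i, p i * (h a i) ^ 2 :=
      Finset.sum_congr rfl fun i _ => by rw [sq_abs]
    rw [e, hp1, mul_one] at hcs
    have hx0 : 0 ≤ ∑ z, p z * |h a z| :=
      Finset.sum_nonneg fun z _ => mul_nonneg (hp z) (abs_nonneg _)
    calc ∑ z, p z * |h a z| = Real.sqrt ((∑ z, p z * |h a z|) ^ 2) :=
          (Real.sqrt_sq hx0).symm
      _ ≤ Real.sqrt (d ^ 2) := Real.sqrt_le_sqrt (le_trans hcs (hnorm a))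
      _ = d := Real.sqrt_sq hd0
  have hnorm' : ∀ z, ∑ y, p y * (h y z) ^ 2 ≤ d ^ 2 := by
    intro z
    calc ∑ y, p y * (h y z) ^ 2 = ∑ y, p y * (h z y) ^ 2 :=
          Finset.sum_congr rfl fun y _ => by rw [hsymm]
      _ ≤ d ^ 2 := hnorm z
  have habs' : ∀ z, ∑ y, p y * |h y z| ≤ d := by
    intro z
    calc ∑ y, p y * |h y z| = ∑ y, p y * |h z y| :=
          Finset.sum_congr rfl fun y _ => by rw [hsymm]
      _ ≤ d := habs z
  -- main per-x bound
  have h2t : (0:ℝ) ≤ 2 * t := by linarith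
  refine ciSup_le fun x => ?_
  set S : Ω → ℝ := fun y => ∑ z, p z * ((P t x z / p z) * (P t y z / p z)) with hS
  have hS0 : ∀ y, 0 ≤ S y := fun y =>
    Finset.sum_nonneg fun z _ => mul_nonneg (hp z) (mul_nonneg (hf0 x z) (hf0 y z))
  have hPS : ∀ y, p y * S y = P (2 * t) x y := by
    intro y
    have hsg : P (2 * t) x y = ∑ z, P t x z * P t z y := by
      rw [two_mul]; exact hsemi t ht t ht x y
    rw [hsg, hS, Finset.mul_sum]
    refine Finset.sum_congr rfl fun z _ => ?_
    have hdz : P t y z / p z = P t z y / p y := by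
      rw [div_eq_div_iff (hppos z).ne' (hppos y).ne']
      have h1 := hrev t ht y z
      linarith
    rw [hdz]
    calc p y * (p z * (P t x z / p z * (P t z y / p y)))
        = (p z * (P t x z / p z)) * (p y * (P t z y / p y)) := by ring
      _ = P t x z * P t z y := by
          rw [mul_div_cancel₀ _ (hppos z).ne', mul_div_cancel₀ _ (hppos y).ne']
  have hSP : ∀ y, P (2 * t) x y / p y = S y := by
    intro y
    rw [← hPS y, mul_comm, mul_div_assoc, div_self (hppos y).ne', mul_one]
  set I11 : Ω → ℝ := fun y => ∑ z, p z * (h x z * h y z) with hI11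
  set I12 : Ω → ℝ := fun y => ∑ z, p z * (h x z * (h y z) ^ 2) with hI12
  set I21 : Ω → ℝ := fun y => ∑ z, p z * ((h x z) ^ 2 * h y z) with hI21
  set I22 : Ω → ℝ := fun y => ∑ z, p z * ((h x z) ^ 2 * (h y z) ^ 2) with hI22
  have hrow1 : ∀ a, ∑ z, p z * (P t a z / p z) = 1 := by
    intro a
    have e : ∀ z : Ω, p z * (P t a z / p z) = P t a z := fun z =>
      mul_div_cancel₀ _ (hppos z).ne'
    rw [Finset.sum_congr rfl fun z _ => e z]
    exact hP1 t ht a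
  have hzero : ∀ a, ∑ z, p z * (2 * h a z + (h a z) ^ 2) = 0 := by
    intro a
    have e : ∀ z : Ω, p z * (2 * h a z + (h a z) ^ 2) = p z * (P t a z / p z) - p z := by
      intro z; rw [hfh a z]; ring
    rw [Finset.sum_congr rfl fun z _ => e z, Finset.sum_sub_distrib, hrow1 a, hp1]
    ring
  have hdecomp : ∀ y, S y - 1 = 4 * I11 y + (2 * I12 y + 2 * I21 y + I22 y) := by
    intro y
    have e : ∀ z : Ω, p z * ((P t x z / p z) * (P t y z / p z))
        = p z + (p z * (2 * h x z + (h x z) ^ 2) + (p z * (2 * h y z + (h y z) ^ 2)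
          + (4 * (p z * (h x z * h y z)) + (2 * (p z * (h x z * (h y z) ^ 2))
          + (2 * (p z * ((h x z) ^ 2 * h y z)) + p z * ((h x z) ^ 2 * (h y z) ^ 2)))))) := by
      intro z; rw [hfh x z, hfh y z]; ring
    have hsum : S y = ∑ z, (p z + (p z * (2 * h x z + (h x z) ^ 2)
        + (p z * (2 * h y z + (h y z) ^ 2)
        + (4 * (p z * (h x z * h y z)) + (2 * (p z * (h x z * (h y z) ^ 2))
        + (2 * (p z * ((h x z) ^ 2 * h y z)) + p z * ((h x z) ^ 2 * (h y z) ^ 2))))))) := by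
      rw [hS]; exact Finset.sum_congr rfl fun z _ => e z
    rw [hsum]
    simp only [Finset.sum_add_distrib, ← Finset.mul_sum]
    rw [hp1, hzero x, hzero y, hI11, hI12, hI21, hI22]
    ring
  -- the target sum
  have hT : ∑ y, (Real.sqrt (P (2 * t) x y / p y) - 1) ^ 2 * p y
      = ∑ y, p y * (Real.sqrt (S y) - 1) ^ 2 :=
    Finset.sum_congr rfl fun y _ => by rw [hSP y]; ring
  have hT0 : 0 ≤ ∑ y, p y * (Real.sqrt (S y) - 1) ^ 2 :=
    Finset.sum_nonneg fun y _ => mul_nonneg (hp y) (sq_nonneg _)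
  -- rough bound : T ≤ 2
  have hT2 : ∑ y, p y * (Real.sqrt (S y) - 1) ^ 2 ≤ 2 := by
    have per : ∀ y, p y * (Real.sqrt (S y) - 1) ^ 2 ≤ p y * (S y + 1) := by
      intro y
      have hsq := Real.sq_sqrt (hS0 y)
      have hsn := Real.sqrt_nonneg (S y)
      apply mul_le_mul_of_nonneg_left _ (hp y)
      nlinarith
    calc ∑ y, p y * (Real.sqrt (S y) - 1) ^ 2 ≤ ∑ y, p y * (S y + 1) :=
          Finset.sum_le_sum fun y _ => per y
      _ = ∑ y, (p y * S y) + ∑ y, p y := by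
          rw [← Finset.sum_add_distrib]
          exact Finset.sum_congr rfl fun y _ => by ring
      _ = 1 + 1 := by
          rw [hp1, Finset.sum_congr rfl fun y _ => hPS y, hP1 (2 * t) h2t x]
      _ = 2 := by norm_num
  -- term bounds
  have hSa : ∑ y, p y * (I11 y) ^ 2 ≤ d ^ 4 := by
    have per : ∀ y, (I11 y) ^ 2 ≤ d ^ 2 * (∑ z, p z * (h y z) ^ 2) := by
      intro y
      have hcs := cs_sum p (h x) (h y) hp
      have hxx := hnorm x
      have hyy0 : 0 ≤ ∑ z, p z * (h y z) ^ 2 :=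
        Finset.sum_nonneg fun z _ => mul_nonneg (hp z) (sq_nonneg _)
      rw [hI11]
      nlinarith
    calc ∑ y, p y * (I11 y) ^ 2
        ≤ ∑ y, p y * (d ^ 2 * (∑ z, p z * (h y z) ^ 2)) :=
          Finset.sum_le_sum fun y _ => mul_le_mul_of_nonneg_left (per y) (hp y)
      _ = d ^ 2 * ∑ y, p y * (∑ z, p z * (h y z) ^ 2) := by
          rw [Finset.mul_sum]
          exact Finset.sum_congr rfl fun y _ => by ring
      _ ≤ d ^ 2 * (d ^ 2 * 1) := by
          apply mul_le_mul_of_nonneg_left _ (sq_nonneg d)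
          calc ∑ y, p y * (∑ z, p z * (h y z) ^ 2) ≤ ∑ y, p y * d ^ 2 :=
                Finset.sum_le_sum fun y _ =>
                  mul_le_mul_of_nonneg_left (hnorm y) (hp y)
            _ = d ^ 2 * 1 := by rw [← Finset.sum_mul, hp1]; ring
      _ = d ^ 4 := by ring
  have hSb : ∑ y, p y * |I12 y| ≤ d ^ 2 * d := by
    refine helper_swap p hp (h x) (fun y z => (h y z) ^ 2) (d ^ 2) d (sq_nonneg d) ?_ (habs x)
    intro z
    calc ∑ y, p y * |(h y z) ^ 2| = ∑ y, p y * (h y z) ^ 2 :=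
          Finset.sum_congr rfl fun y _ => by rw [abs_of_nonneg (sq_nonneg _)]
      _ ≤ d ^ 2 := hnorm' z
  have hSc : ∑ y, p y * |I21 y| ≤ d * d ^ 2 := by
    refine helper_swap p hp (fun z => (h x z) ^ 2) (fun y z => h y z) d (d ^ 2) hd0 habs' ?_
    calc ∑ z, p z * |(h x z) ^ 2| = ∑ z, p z * (h x z) ^ 2 :=
          Finset.sum_congr rfl fun z _ => by rw [abs_of_nonneg (sq_nonneg _)]
      _ ≤ d ^ 2 := hnorm x
  have hSd : ∑ y, p y * |I22 y| ≤ d ^ 2 * d ^ 2 := by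
    refine helper_swap p hp (fun z => (h x z) ^ 2) (fun y z => (h y z) ^ 2) (d ^ 2) (d ^ 2)
      (sq_nonneg d) ?_ ?_
    · intro z
      calc ∑ y, p y * |(h y z) ^ 2| = ∑ y, p y * (h y z) ^ 2 :=
            Finset.sum_congr rfl fun y _ => by rw [abs_of_nonneg (sq_nonneg _)]
        _ ≤ d ^ 2 := hnorm' z
    · calc ∑ z, p z * |(h x z) ^ 2| = ∑ z, p z * (h x z) ^ 2 :=
            Finset.sum_congr rfl fun z _ => by rw [abs_of_nonneg (sq_nonneg _)]
        _ ≤ d ^ 2 := hnorm x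
  -- main bound
  have hTmain : ∑ y, p y * (Real.sqrt (S y) - 1) ^ 2 ≤ 8 * d ^ 3 + 34 * d ^ 4 := by
    have per : ∀ y, p y * (Real.sqrt (S y) - 1) ^ 2
        ≤ 32 * (p y * (I11 y) ^ 2) + (4 * (p y * |I12 y|)
          + (4 * (p y * |I21 y|) + 2 * (p y * |I22 y|))) := by
      intro y
      have hk := key_min (S y) (4 * I11 y) (2 * I12 y + 2 * I21 y + I22 y) (hS0 y) (hdecomp y)
      have habs3 : |2 * I12 y + 2 * I21 y + I22 y| ≤ 2 * |I12 y| + 2 * |I21 y| + |I22 y| := by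
        calc |2 * I12 y + 2 * I21 y + I22 y| ≤ |2 * I12 y + 2 * I21 y| + |I22 y| :=
              abs_add_le _ _
          _ ≤ |2 * I12 y| + |2 * I21 y| + |I22 y| := by
              linarith [abs_add_le (2 * I12 y) (2 * I21 y)]
          _ = 2 * |I12 y| + 2 * |I21 y| + |I22 y| := by
              rw [abs_mul, abs_mul]; norm_num
      have hky : (Real.sqrt (S y) - 1) ^ 2
          ≤ 32 * (I11 y) ^ 2 + (4 * |I12 y| + (4 * |I21 y| + 2 * |I22 y|)) := by nlinarith
      calc p y * (Real.sqrt (S y) - 1) ^ 2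
          ≤ p y * (32 * (I11 y) ^ 2 + (4 * |I12 y| + (4 * |I21 y| + 2 * |I22 y|))) :=
            mul_le_mul_of_nonneg_left hky (hp y)
        _ = 32 * (p y * (I11 y) ^ 2) + (4 * (p y * |I12 y|)
            + (4 * (p y * |I21 y|) + 2 * (p y * |I22 y|))) := by ring
    calc ∑ y, p y * (Real.sqrt (S y) - 1) ^ 2
        ≤ ∑ y, (32 * (p y * (I11 y) ^ 2) + (4 * (p y * |I12 y|)
          + (4 * (p y * |I21 y|) + 2 * (p y * |I22 y|)))) :=
          Finset.sum_le_sum fun y _ => per y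
      _ = 32 * (∑ y, p y * (I11 y) ^ 2) + (4 * (∑ y, p y * |I12 y|)
          + (4 * (∑ y, p y * |I21 y|) + 2 * (∑ y, p y * |I22 y|))) := by
          simp only [Finset.sum_add_distrib, ← Finset.mul_sum]
      _ ≤ 8 * d ^ 3 + 34 * d ^ 4 := by nlinarith [hSa, hSb, hSc, hSd]
  -- conclude
  rw [hT]
  exact final_calc d _ hd0 hT0 hTmain hT2
end

section
/- Let τ_n be a random variable which, with probability 1/n, is distributed as a sum of 2n i.i.d. Exp(1) random variables, and with probability 1 − 1/n as a sum of (n+1) i.i.d. Exp(1) random variables. Then for fixed s: lim_{n→∞} n·P(τ_n > ns) = ∞ if s < 1, = 1 if 1 < s < 2, and = 0 if s > 2. -/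
/-!
Conditioning on the mixture, `n P(τ_n > n s) = P(X_{2n} > n s) + (n - 1) P(Y_{n+1} > n s)` with
`X_{2n} ~ Γ(2n, 1)` and `Y_{n+1} ~ Γ(n + 1, 1)`. A `Γ(c n + d, 1)` variable concentrates at `c n`
with exponentially small deviations: the Chernoff bound, with the moment generating function
`(1 - t)^{-a}` of `Γ(a, 1)`, bounds the probability of the wrong side of `n s` by `K ρ^n` for some
`ρ < 1` whenever `s ≠ c`. So the first term tends to `1` or `0` as `s < 2` or `s > 2`, and the
second tends to `∞` or `0` as `s < 1` or `s > 1`.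
-/

open MeasureTheory ProbabilityTheory Filter

/-- The law of the hitting time `τ_n`: with probability `1/n` a `Gamma(2n,1)`
distribution and with probability `1 - 1/n` a `Gamma(n+1,1)` distribution. -/
noncomputable def mixtureLaw (n : ℕ) : Measure ℝ :=
  (ENNReal.ofReal (1 / n)) • gammaMeasure (2 * n) 1 +
    (ENNReal.ofReal (1 - 1 / n)) • gammaMeasure (n + 1) 1

open Real Set Topology

section GammaMGF

variable {a r t : ℝ}

lemma gammaPDF_mul_exp (hr : 0 < r) (ht : t < r) (x : ℝ) :
    gammaPDF a r x * ENNReal.ofReal (exp (t * x)) =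
      ENNReal.ofReal ((r / (r - t)) ^ a) * gammaPDF a (r - t) x := by
  rcases lt_or_ge x 0 with hx | hx
  · simp [gammaPDF_of_neg hx]
  have hrt : 0 < r - t := sub_pos.2 ht
  rw [gammaPDF_of_nonneg hx, gammaPDF_of_nonneg hx, ← ENNReal.ofReal_mul' (exp_nonneg _),
    ← ENNReal.ofReal_mul (by positivity), div_rpow hr.le hrt.le,
    show -((r - t) * x) = -(r * x) + t * x by ring, exp_add]
  congr 1
  field_simp

lemma lintegral_exp_mul_gammaMeasure (ha : 0 < a) (hr : 0 < r) (ht : t < r) :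
    ∫⁻ x, ENNReal.ofReal (exp (t * x)) ∂gammaMeasure a r =
      ENNReal.ofReal ((r / (r - t)) ^ a) := by
  have hm (b : ℝ) : Measurable (gammaPDF a b) := (measurable_gammaPDFReal a b).ennreal_ofReal
  rw [gammaMeasure, lintegral_withDensity_eq_lintegral_mul _ (hm r) (by fun_prop)]
  simp only [Pi.mul_apply, gammaPDF_mul_exp hr ht]
  rw [lintegral_const_mul _ (hm _),
    lintegral_gammaPDF_eq_one ha (sub_pos.2 ht), mul_one]

lemma integrable_exp_mul_gammaMeasure (ha : 0 < a) (hr : 0 < r) (ht : t < r) :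
    Integrable (fun x ↦ exp (t * x)) (gammaMeasure a r) := by
  simpa [ENNReal.toReal_ofReal (exp_nonneg _)] using
    integrable_toReal_of_lintegral_ne_top (by fun_prop)
      ((lintegral_exp_mul_gammaMeasure ha hr ht).trans_ne ENNReal.ofReal_ne_top)

lemma mgf_id_gammaMeasure (ha : 0 < a) (hr : 0 < r) (ht : t < r) :
    mgf id (gammaMeasure a r) t = (r / (r - t)) ^ a := by
  have h := integral_toReal (μ := gammaMeasure a r) (f := fun x ↦ ENNReal.ofReal (exp (t * x)))
    (by fun_prop) (ae_of_all _ fun _ ↦ ENNReal.ofReal_lt_top)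
  rw [lintegral_exp_mul_gammaMeasure ha hr ht, ENNReal.toReal_ofReal (by positivity)] at h
  simp only [ENNReal.toReal_ofReal (exp_nonneg _)] at h
  exact h

lemma gammaMeasure_real_Ici_le (ha : 0 < a) (hr : 0 < r) (ht₀ : 0 ≤ t) (ht : t < r) (u : ℝ) :
    (gammaMeasure a r).real (Ici u) ≤ exp (-t * u) * (r / (r - t)) ^ a := by
  have := isProbabilityMeasure_gammaMeasure ha hr
  have h := measure_ge_le_exp_mul_mgf (X := id) u ht₀ (integrable_exp_mul_gammaMeasure ha hr ht)
  rwa [mgf_id_gammaMeasure ha hr ht] at h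

lemma gammaMeasure_real_Iic_le (ha : 0 < a) (hr : 0 < r) (ht : t ≤ 0) (u : ℝ) :
    (gammaMeasure a r).real (Iic u) ≤ exp (-t * u) * (r / (r - t)) ^ a := by
  have := isProbabilityMeasure_gammaMeasure ha hr
  have htr : t < r := ht.trans_lt hr
  have h := measure_le_le_exp_mul_mgf (X := id) u ht (integrable_exp_mul_gammaMeasure ha hr htr)
  rwa [mgf_id_gammaMeasure ha hr htr] at h

end GammaMGF

lemma exists_chernoff_rate_lt_one {c s : ℝ} (hc : 0 < c) (hsc : s ≠ c) :
    ∃ t < 1, 0 < t * (s - c) ∧ exp (-t * s) * (1 / (1 - t)) ^ c < 1 := by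
  set ε := 1 / (1 + |s| + |s - c|)
  have hε : 0 < ε := by positivity
  have hεD : ε * (1 + |s| + |s - c|) = 1 := one_div_mul_cancel (by positivity)
  have hεs : ε * s < 1 := by nlinarith [le_abs_self s, abs_nonneg (s - c)]
  have hεsc : ε * (s - c) < 1 := by nlinarith [le_abs_self (s - c), abs_nonneg s]
  set t := ε * (s - c)
  have hsc' : 0 < (s - c) ^ 2 := by positivity
  have h1t : 0 < 1 - t := by linarith
  refine ⟨t, by linarith, by nlinarith, ?_⟩
  -- Since `log (1 / (1 - t)) ≤ t / (1 - t)`, the exponent `-t s + c log (1 / (1 - t))` is at most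
  -- `-ε (s - c)² (1 - ε s) / (1 - t) < 0`.
  have hlog : log (1 / (1 - t)) ≤ 1 / (1 - t) - 1 := log_le_sub_one_of_pos (by positivity)
  rw [rpow_def_of_pos (by positivity), ← exp_add, exp_lt_one_iff]
  have key : (1 / (1 - t) - 1) * c < t * s := by
    rw [div_sub_one h1t.ne', div_mul_eq_mul_div, div_lt_iff₀ h1t]
    nlinarith [mul_pos (mul_pos hε hsc') (sub_pos.2 hεs)]
  nlinarith

lemma exp_neg_mul_natCast_mul_rpow {x : ℝ} (hx : 0 < x) (t s c d : ℝ) (n : ℕ) :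
    exp (-t * (n * s)) * x ^ (c * n + d) = (exp (-t * s) * x ^ c) ^ n * x ^ d := by
  rw [rpow_add hx, rpow_mul_natCast hx.le, mul_pow, ← exp_nat_mul]
  ring_nf

lemma eventually_pos_mul_natCast_add {c : ℝ} (hc : 0 < c) (d : ℝ) :
    ∀ᶠ n : ℕ in atTop, 0 < c * n + d :=
  ((tendsto_natCast_atTop_atTop.const_mul_atTop hc).atTop_add
    tendsto_const_nhds).eventually_gt_atTop 0

section GammaTails

variable {c d s : ℝ}

lemma tendsto_gammaMeasure_real_Ioi_natCast_mul_of_lt (hc : 0 < c) (hs : s < c) :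
    Tendsto (fun n : ℕ ↦ (gammaMeasure (c * n + d) 1).real (Ioi (n * s))) atTop (𝓝 1) := by
  obtain ⟨t, ht, hts, hρ⟩ := exists_chernoff_rate_lt_one hc hs.ne
  have ht₀ : t ≤ 0 := by nlinarith
  have h1t : 0 < 1 / (1 - t) := by rw [one_div_pos]; linarith
  set ρ := exp (-t * s) * (1 / (1 - t)) ^ c
  have hlow : Tendsto (fun n : ℕ ↦ 1 - ρ ^ n * (1 / (1 - t)) ^ d) atTop (𝓝 1) := by
    simpa using
      ((tendsto_pow_atTop_nhds_zero_of_lt_one (by positivity) hρ).mul_const _).const_sub 1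
  refine tendsto_of_tendsto_of_tendsto_of_le_of_le' hlow tendsto_const_nhds ?_ ?_
  · filter_upwards [eventually_pos_mul_natCast_add hc d] with n hn
    have := isProbabilityMeasure_gammaMeasure hn one_pos
    have h := gammaMeasure_real_Iic_le hn one_pos ht₀ (n * s)
    rw [exp_neg_mul_natCast_mul_rpow h1t] at h
    rw [← compl_Iic, measureReal_compl measurableSet_Iic, probReal_univ]
    linarith
  · filter_upwards [eventually_pos_mul_natCast_add hc d] with n hn
    have := isProbabilityMeasure_gammaMeasure hn one_pos
    exact measureReal_le_one

lemma tendsto_natCast_mul_gammaMeasure_real_Ioi_natCast_mul_of_gt (hc : 0 < c) (hs : c < s) :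
    Tendsto (fun n : ℕ ↦ n * (gammaMeasure (c * n + d) 1).real (Ioi (n * s))) atTop
      (𝓝 0) := by
  obtain ⟨t, ht, hts, hρ⟩ := exists_chernoff_rate_lt_one hc hs.ne'
  have ht₀ : 0 ≤ t := by nlinarith
  have h1t : 0 < 1 / (1 - t) := by rw [one_div_pos]; linarith
  set ρ := exp (-t * s) * (1 / (1 - t)) ^ c
  have hup : Tendsto (fun n : ℕ ↦ n * ρ ^ n * (1 / (1 - t)) ^ d) atTop (𝓝 0) := by
    simpa using (tendsto_self_mul_const_pow_of_lt_one (by positivity) hρ).mul_const _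
  refine squeeze_zero' (.of_forall fun n ↦ by positivity) ?_ hup
  filter_upwards [eventually_pos_mul_natCast_add hc d] with n hn
  have h := gammaMeasure_real_Ici_le hn one_pos ht₀ ht (n * s)
  rw [exp_neg_mul_natCast_mul_rpow h1t] at h
  have := isProbabilityMeasure_gammaMeasure hn one_pos
  rw [mul_assoc]
  gcongr
  exact (measureReal_mono Ioi_subset_Ici_self).trans h

end GammaTails

lemma tendsto_zero_of_natCast_mul_tendsto_zero {u : ℕ → ℝ}
    (h : Tendsto (fun n : ℕ ↦ n * u n) atTop (𝓝 0)) : Tendsto u atTop (𝓝 0) := by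
  refine (h.div_atTop tendsto_natCast_atTop_atTop).congr' ?_
  filter_upwards [eventually_ne_atTop 0] with n hn
  field_simp

lemma natCast_mul_mixtureLaw_real {n : ℕ} (hn : 1 ≤ n) (S : Set ℝ) :
    n * (mixtureLaw n).real S =
      (gammaMeasure (2 * n) 1).real S + (n - 1) * (gammaMeasure (n + 1) 1).real S := by
  have hn₀ : (0 : ℝ) < n := by exact_mod_cast hn
  have := isProbabilityMeasure_gammaMeasure (by positivity : (0 : ℝ) < 2 * n) one_pos
  have := isProbabilityMeasure_gammaMeasure (by positivity : (0 : ℝ) < n + 1) one_pos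
  have hn₁ : 1 / (n : ℝ) ≤ 1 := (div_le_one hn₀).2 (by exact_mod_cast hn)
  simp only [mixtureLaw, measureReal_def, Measure.add_apply, Measure.smul_apply, smul_eq_mul]
  rw [ENNReal.toReal_add (by finiteness) (by finiteness), ENNReal.toReal_mul, ENNReal.toReal_mul,
    ENNReal.toReal_ofReal (by positivity), ENNReal.toReal_ofReal (by linarith)]
  field_simp

theorem mixture_tail_asymptotics_general
    {α : Type*} [MeasurableSpace α] (μ : Measure α)
    (τ : ℕ → α → ℝ) (hmeas : ∀ n, Measurable (τ n))
    (hlaw : ∀ n : ℕ, 1 ≤ n → μ.map (τ n) = mixtureLaw n) (s : ℝ) :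
    (s < 1 → Tendsto (fun n : ℕ =>
        (n : ℝ) * (μ {ω | (n : ℝ) * s < τ n ω}).toReal) atTop atTop) ∧
    (1 < s → s < 2 → Tendsto (fun n : ℕ =>
        (n : ℝ) * (μ {ω | (n : ℝ) * s < τ n ω}).toReal) atTop (nhds 1)) ∧
    (2 < s → Tendsto (fun n : ℕ =>
        (n : ℝ) * (μ {ω | (n : ℝ) * s < τ n ω}).toReal) atTop (nhds 0)) := by
  set p : ℕ → ℝ := fun n ↦ (gammaMeasure (2 * n) 1).real (Ioi (n * s))
  set q : ℕ → ℝ := fun n ↦ (gammaMeasure (n + 1) 1).real (Ioi (n * s))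
  have hF : (fun n : ℕ ↦ (n : ℝ) * (μ {ω | (n : ℝ) * s < τ n ω}).toReal) =ᶠ[atTop]
      fun n ↦ p n + (n - 1) * q n := by
    filter_upwards [eventually_ge_atTop 1] with n hn
    rw [← natCast_mul_mixtureLaw_real hn, ← hlaw n hn, measureReal_def,
      Measure.map_apply (hmeas n) measurableSet_Ioi]
    rfl
  have hp_of_lt (hs : s < 2) : Tendsto p atTop (𝓝 1) := by
    simpa using tendsto_gammaMeasure_real_Ioi_natCast_mul_of_lt (d := 0) two_pos hs
  have hp_of_gt (hs : 2 < s) : Tendsto p atTop (𝓝 0) := by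
    refine tendsto_zero_of_natCast_mul_tendsto_zero ?_
    simpa using tendsto_natCast_mul_gammaMeasure_real_Ioi_natCast_mul_of_gt (d := 0) two_pos hs
  have hq_of_lt (hs : s < 1) : Tendsto q atTop (𝓝 1) := by
    simpa using tendsto_gammaMeasure_real_Ioi_natCast_mul_of_lt (d := 1) one_pos hs
  have hq_of_gt (hs : 1 < s) : Tendsto (fun n : ℕ ↦ (n - 1) * q n) atTop (𝓝 0) := by
    have h : Tendsto (fun n : ℕ ↦ n * q n) atTop (𝓝 0) := by
      simpa using
        tendsto_natCast_mul_gammaMeasure_real_Ioi_natCast_mul_of_gt (d := 1) one_pos hs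
    simpa [sub_mul] using h.sub (tendsto_zero_of_natCast_mul_tendsto_zero h)
  refine ⟨fun hs ↦ ?_, fun hs₁ hs₂ ↦ ?_, fun hs ↦ ?_⟩
  · have h : Tendsto (fun n : ℕ ↦ ((n : ℝ) - 1) * q n) atTop atTop := by
      refine Tendsto.atTop_mul_pos one_pos ?_ (hq_of_lt hs)
      simpa [sub_eq_add_neg] using
        tendsto_atTop_add_const_right _ (-1) tendsto_natCast_atTop_atTop
    refine tendsto_atTop_mono' atTop (hF.mono fun n hn ↦ ?_) h
    rw [hn]
    exact le_add_of_nonneg_left measureReal_nonneg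
  · simpa using ((hp_of_lt hs₂).add (hq_of_gt hs₁)).congr' hF.symm
  · simpa using ((hp_of_gt hs).add (hq_of_gt (by linarith))).congr' hF.symm

theorem mixture_tail_asymptotics
    {α : Type*} [MeasurableSpace α] (μ : Measure α) [IsProbabilityMeasure μ]
    (τ : ℕ → α → ℝ) (hmeas : ∀ n, Measurable (τ n))
    (hlaw : ∀ n : ℕ, 1 ≤ n → μ.map (τ n) = mixtureLaw n) (s : ℝ) :
    (s < 1 → Tendsto (fun n : ℕ =>
        (n : ℝ) * (μ {ω | (n : ℝ) * s < τ n ω}).toReal) atTop atTop) ∧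
    (1 < s → s < 2 → Tendsto (fun n : ℕ =>
        (n : ℝ) * (μ {ω | (n : ℝ) * s < τ n ω}).toReal) atTop (nhds 1)) ∧
    (2 < s → Tendsto (fun n : ℕ =>
        (n : ℝ) * (μ {ω | (n : ℝ) * s < τ n ω}).toReal) atTop (nhds 0)) :=
  mixture_tail_asymptotics_general μ τ hmeas hlaw s
end
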